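/- arXiv:2403.15602 — 3 statements merged into one kernel-verified Lean document; each statement's English description precedes it below -/
import Mathlib

section
/- Let G be a graph that admits a proper edge-coloring under which G is rainbow C_4-free, and let v be a vertex of G. Then the neighborhood N(v) does not contain a 4-cycle; that is, there do not exist four distinct vertices v_1, v_2, v_3, v_4 ∈ N(v) such that v_1v_2, v_2v_3, v_3v_4, v_4v_1 are all edges of G. -/
/-- A proper edge-coloring: any two distinct edges of `G` sharing a vertex
receive different colors. -/
def ProperEdgeColoring {V : Type*} (G : SimpleGraph V) (c : Sym2 V → ℕ) : Prop :=
  ∀ e₁ ∈ G.edgeSet, ∀ e₂ ∈ G.edgeSet, e₁ ≠ e₂ → (∃ v, v ∈ e₁ ∧ v ∈ e₂) → c e₁ ≠ c e₂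

/-- `G` contains a rainbow copy of the cycle `C_k` under the edge-coloring `c`:
there are `k` distinct vertices, cyclically consecutive ones adjacent, whose
`k` cycle edges receive pairwise distinct colors. -/
def HasRainbowCycle {V : Type*} (G : SimpleGraph V) (c : Sym2 V → ℕ) (k : ℕ) : Prop :=
  ∃ f : ZMod k → V, Function.Injective f ∧ (∀ i, G.Adj (f i) (f (i + 1))) ∧
    Function.Injective (fun i : ZMod k => c s(f i, f (i + 1)))

/-- `G` is (properly) rainbow `C_k`-saturated: some proper edge-coloring of `G`
has no rainbow `C_k`-copy, but for every pair of nonadjacent vertices `x, y`,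
every proper edge-coloring of `G + xy` contains a rainbow `C_k`-copy. -/
def RainbowSat {V : Type*} (G : SimpleGraph V) (k : ℕ) : Prop :=
  (∃ c, ProperEdgeColoring G c ∧ ¬ HasRainbowCycle G c k) ∧
  ∀ x y : V, x ≠ y → ¬ G.Adj x y →
    ∀ c, ProperEdgeColoring (G ⊔ SimpleGraph.fromEdgeSet {s(x, y)}) c →
      HasRainbowCycle (G ⊔ SimpleGraph.fromEdgeSet {s(x, y)}) c k

/-!
Let `v₁v₂v₃v₄` be a 4-cycle in `N(v)`, so that `v` is the hub of a wheel `W₄`. A 4-cycle of a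
properly coloured graph fails to be rainbow only if one of its two pairs of opposite edges is
monochromatic. Applied to the rim, this makes two opposite rim edges, say `v₁v₂` and `v₃v₄`, share a
colour, which is then the colour of no spoke. The 4-cycles `v v₁ v₂ v₃` and `v v₄ v₃ v₂` therefore
both have to repeat a colour on the pair containing `v₂v₃`, so `v₂v₃` takes the colours of both
spokes `vv₁` and `vv₄`, which are different.
-/

lemma hasRainbowCycle_four {V : Type*} {G : SimpleGraph V} {c : Sym2 V → ℕ} {w₁ w₂ w₃ w₄ : V}
    (h₁₂ : G.Adj w₁ w₂) (h₂₃ : G.Adj w₂ w₃) (h₃₄ : G.Adj w₃ w₄) (h₄₁ : G.Adj w₄ w₁)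
    (h₁₃ : w₁ ≠ w₃) (h₂₄ : w₂ ≠ w₄)
    (c₁ : c s(w₁, w₂) ≠ c s(w₂, w₃)) (c₂ : c s(w₁, w₂) ≠ c s(w₃, w₄))
    (c₃ : c s(w₁, w₂) ≠ c s(w₄, w₁)) (c₄ : c s(w₂, w₃) ≠ c s(w₃, w₄))
    (c₅ : c s(w₂, w₃) ≠ c s(w₄, w₁)) (c₆ : c s(w₃, w₄) ≠ c s(w₄, w₁)) :
    HasRainbowCycle G c 4 := by
  have cases (i : ZMod 4) : i = 0 ∨ i = 1 ∨ i = 2 ∨ i = 3 := by revert i; decide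
  have succ : ((0 : ZMod 4) + 1 = 1) ∧ ((1 : ZMod 4) + 1 = 2) ∧ ((2 : ZMod 4) + 1 = 3) ∧
      ((3 : ZMod 4) + 1 = 0) := by decide
  have := h₁₂.ne; have := h₂₃.ne; have := h₃₄.ne; have := h₄₁.ne
  refine ⟨![w₁, w₂, w₃, w₄], ?_, ?_, ?_⟩
  · intro i j h
    rcases cases i with rfl | rfl | rfl | rfl <;> rcases cases j with rfl | rfl | rfl | rfl <;>
      simp_all
  · intro i
    rcases cases i with rfl | rfl | rfl | rfl <;> simp_all
  · intro i j h
    rcases cases i with rfl | rfl | rfl | rfl <;> rcases cases j with rfl | rfl | rfl | rfl <;>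
      simp_all [Sym2.eq_swap]

namespace ProperEdgeColoring

variable {V : Type*} {G : SimpleGraph V} {c : Sym2 V → ℕ}

lemma color_ne (hc : ProperEdgeColoring G c) {u x y : V} (hx : G.Adj u x) (hy : G.Adj u y)
    (hxy : x ≠ y) : c s(u, x) ≠ c s(u, y) :=
  hc _ hx _ hy (by simp [hxy, hx.ne']) ⟨u, Sym2.mem_mk_left u x, Sym2.mem_mk_left u y⟩

lemma opposite_color_eq_of_not_hasRainbowCycle (hc : ProperEdgeColoring G c)
    (hfree : ¬ HasRainbowCycle G c 4) {w₁ w₂ w₃ w₄ : V}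
    (h₁₂ : G.Adj w₁ w₂) (h₂₃ : G.Adj w₂ w₃) (h₃₄ : G.Adj w₃ w₄) (h₄₁ : G.Adj w₄ w₁)
    (h₁₃ : w₁ ≠ w₃) (h₂₄ : w₂ ≠ w₄) :
    c s(w₁, w₂) = c s(w₃, w₄) ∨ c s(w₂, w₃) = c s(w₄, w₁) := by
  by_contra! h
  refine hfree (hasRainbowCycle_four h₁₂ h₂₃ h₃₄ h₄₁ h₁₃ h₂₄ ?_ h.1 ?_ ?_ h.2 ?_)
  · rw [Sym2.eq_swap (a := w₁)]
    exact hc.color_ne h₁₂.symm h₂₃ h₁₃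
  · rw [Sym2.eq_swap (a := w₄)]
    exact hc.color_ne h₁₂ h₄₁.symm h₂₄
  · rw [Sym2.eq_swap (a := w₂)]
    exact hc.color_ne h₂₃.symm h₃₄ h₂₄
  · rw [Sym2.eq_swap (a := w₃)]
    exact hc.color_ne h₃₄.symm h₄₁ h₁₃.symm

lemma wheel_opposite_rim_color_ne (hc : ProperEdgeColoring G c)
    (hfree : ¬ HasRainbowCycle G c 4) {v v₁ v₂ v₃ v₄ : V}
    (b₁ : G.Adj v v₁) (b₂ : G.Adj v v₂) (b₃ : G.Adj v v₃) (b₄ : G.Adj v v₄)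
    (e₁₂ : G.Adj v₁ v₂) (e₂₃ : G.Adj v₂ v₃) (e₃₄ : G.Adj v₃ v₄) (e₄₁ : G.Adj v₄ v₁)
    (h₁₃ : v₁ ≠ v₃) (h₂₄ : v₂ ≠ v₄) :
    c s(v₁, v₂) ≠ c s(v₃, v₄) := by
  intro h
  have h₁ : c s(v, v₁) = c s(v₂, v₃) := by
    refine (hc.opposite_color_eq_of_not_hasRainbowCycle hfree b₁ e₁₂ e₂₃ b₃.symm b₂.ne h₁₃
      ).resolve_right fun h' => hc.color_ne e₃₄ b₃.symm b₄.ne.symm ?_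
    rw [← h, h']
  have h₄ : c s(v, v₄) = c s(v₂, v₃) := by
    rw [Sym2.eq_swap (a := v₂)]
    refine (hc.opposite_color_eq_of_not_hasRainbowCycle hfree b₄ e₃₄.symm e₂₃.symm b₂.symm
      b₃.ne h₂₄.symm).resolve_right fun h' => hc.color_ne e₁₂.symm b₂.symm b₁.ne.symm ?_
    rw [Sym2.eq_swap (a := v₂), h, Sym2.eq_swap (a := v₃), h']
  exact hc.color_ne b₁ b₄ e₄₁.ne.symm (h₁.trans h₄.symm)

end ProperEdgeColoring

/-- If `G` admits a proper edge-coloring with no rainbow `C₄`-copy, then for any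
vertex `v`, the neighborhood `N(v)` does not contain a 4-cycle. -/
theorem no_C4_in_nbhd {V : Type*} (G : SimpleGraph V)
    (c : Sym2 V → ℕ) (hc : ProperEdgeColoring G c) (hfree : ¬ HasRainbowCycle G c 4)
    (v : V) :
    ¬ ∃ v₁ v₂ v₃ v₄ : V,
        v₁ ≠ v₂ ∧ v₁ ≠ v₃ ∧ v₁ ≠ v₄ ∧ v₂ ≠ v₃ ∧ v₂ ≠ v₄ ∧ v₃ ≠ v₄ ∧
        G.Adj v v₁ ∧ G.Adj v v₂ ∧ G.Adj v v₃ ∧ G.Adj v v₄ ∧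
        G.Adj v₁ v₂ ∧ G.Adj v₂ v₃ ∧ G.Adj v₃ v₄ ∧ G.Adj v₄ v₁ := by
  rintro ⟨v₁, v₂, v₃, v₄, -, h₁₃, -, -, h₂₄, -, b₁, b₂, b₃, b₄, e₁₂, e₂₃, e₃₄, e₄₁⟩
  rcases hc.opposite_color_eq_of_not_hasRainbowCycle hfree e₁₂ e₂₃ e₃₄ e₄₁ h₁₃ h₂₄ with h | h
  · exact hc.wheel_opposite_rim_color_ne hfree b₁ b₂ b₃ b₄ e₁₂ e₂₃ e₃₄ e₄₁ h₁₃ h₂₄ h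
  · exact hc.wheel_opposite_rim_color_ne hfree b₂ b₃ b₄ b₁ e₂₃ e₃₄ e₄₁ e₁₂ h₂₄ h₁₃.symm h
end

section
/- Let G be a graph that admits a proper edge-coloring under which G is rainbow C_4-free, and let v be a vertex of G. Then the neighborhood N(v) does not contain the double star D_{2,2} or any subdivision thereof; that is, for every k ≥ 2 there do not exist k+4 distinct vertices v_1, ..., v_k, v_{k+1}, v_{k+2}, v_{k+3}, v_{k+4} ∈ N(v) such that v_1v_2, v_2v_3, ..., v_{k−1}v_k (a path from v_1 to v_k) and v_1v_{k+1}, v_1v_{k+2}, v_kv_{k+3}, v_kv_{k+4} are all edges of G. -/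
/-! Without a rainbow `C₄`, every properly colored 4-cycle repeats a color on a pair of opposite
edges. For a path `x y z` inside `N(v)` this forces `c(yz) = c(vx)` as soon as `c(xy) = c(vp)` for
some `p ≠ z` in `N(v)`. The 4-cycle `v a₁ w₀ a₂` lets us name the leaves at `w₀` as `a, a'` with
`c(w₀a') = c(va)`; the rule then propagates along the sequence `a, a', w₀, …, w_{k-1}` and on to
either leaf `b` at the far end: both pendant edges at `w_{k-1}` get the color `c(v w_{k-2})`,
contradicting properness. -/

theorem Matrix.injective_vecCons_four {α : Type*} {a b c d : α} :
    Function.Injective ![a, b, c, d] ↔ a ≠ b ∧ a ≠ c ∧ a ≠ d ∧ b ≠ c ∧ b ≠ d ∧ c ≠ d := by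
  rw [← List.nodup_ofFn]
  simp [not_or, and_assoc]

namespace ProperEdgeColoring

variable {V : Type*} {G : SimpleGraph V} {c : Sym2 V → ℕ}

theorem color_ne_s10 (hc : ProperEdgeColoring G c) {v p q : V} (hp : G.Adj v p) (hq : G.Adj v q)
    (hpq : p ≠ q) : c s(v, p) ≠ c s(v, q) :=
  hc _ hp _ hq (by simp [hpq, hq.ne]) ⟨v, by simp, by simp⟩

theorem eq_of_color_eq (hc : ProperEdgeColoring G c) {v p q : V} (hp : G.Adj v p)
    (hq : G.Adj v q) (h : c s(v, p) = c s(v, q)) : p = q := by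
  by_contra hpq
  exact hc.color_ne_s10 hp hq hpq h

theorem opposite_color_eq_of_not_hasRainbowCycle_s10 (hc : ProperEdgeColoring G c)
    (hfree : ¬ HasRainbowCycle G c 4) {v x y z : V} (hvx : G.Adj v x) (hvy : G.Adj v y)
    (hxz : G.Adj x z) (hyz : G.Adj y z) (hxy : x ≠ y) (hvz : v ≠ z) :
    c s(z, y) = c s(v, x) ∨ c s(z, x) = c s(v, y) := by
  by_contra! h
  let f : ZMod 4 → V := ![v, x, z, y]
  refine hfree ⟨f, ?_, ?_, ?_⟩
  · exact Matrix.injective_vecCons_four.2 ⟨hvx.ne, hvz, hvy.ne, hxz.ne, hxy, hyz.ne.symm⟩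
  · intro i
    fin_cases i
    exacts [hvx, hxz, hyz.symm, hvy.symm]
  · have hcol : (fun i => c s(f i, f (i + 1))) =
        ![c s(v, x), c s(x, z), c s(z, y), c s(y, v)] := by
      funext i
      fin_cases i <;> rfl
    rw [hcol]
    refine Matrix.injective_vecCons_four.2 ⟨?_, fun h' => h.1 h'.symm, ?_, ?_, ?_, ?_⟩
    · rw [Sym2.eq_swap]
      exact hc.color_ne_s10 hvx.symm hxz hvz
    · rw [Sym2.eq_swap (a := y)]
      exact hc.color_ne_s10 hvx hvy hxy
    · rw [Sym2.eq_swap (a := x)]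
      exact hc.color_ne_s10 hxz.symm hyz.symm hxy
    · rw [Sym2.eq_swap (a := x), Sym2.eq_swap (a := y)]
      exact h.2
    · rw [Sym2.eq_swap (a := z)]
      exact hc.color_ne_s10 hyz hvy.symm hvz.symm

theorem color_next_edge_eq (hc : ProperEdgeColoring G c) (hfree : ¬ HasRainbowCycle G c 4)
    {v p x y z : V} (hvp : G.Adj v p) (hvx : G.Adj v x) (hvz : G.Adj v z) (hvy : v ≠ y)
    (hxy : G.Adj x y) (hyz : G.Adj y z) (hxz : x ≠ z) (hpz : p ≠ z)
    (h : c s(x, y) = c s(v, p)) : c s(y, z) = c s(v, x) := by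
  refine (hc.opposite_color_eq_of_not_hasRainbowCycle_s10 hfree hvx hvz hxy hyz.symm hxz hvy
    ).resolve_right fun h' => hpz (hc.eq_of_color_eq hvp hvz ?_)
  rw [← h, ← h', Sym2.eq_swap]

theorem color_path_edge_eq (hc : ProperEdgeColoring G c) (hfree : ¬ HasRainbowCycle G c 4)
    {v : V} {u : ℕ → V} {n : ℕ} (hv : ∀ i ≤ n, G.Adj v (u i))
    (hadj : ∀ i, i + 2 ≤ n → G.Adj (u (i + 1)) (u (i + 2))) (hinj : Set.InjOn u (Set.Iic n))
    (h₀ : c s(u 1, u 2) = c s(v, u 0)) :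
    ∀ i, i + 2 ≤ n → c s(u (i + 1), u (i + 2)) = c s(v, u i) := by
  have hne : ∀ i j, i ≤ n → j ≤ n → i ≠ j → u i ≠ u j := fun i j hi hj hij h =>
    hij (hinj (Set.mem_Iic.2 hi) (Set.mem_Iic.2 hj) h)
  intro i hi
  induction i with
  | zero => exact h₀
  | succ i ih =>
    exact hc.color_next_edge_eq hfree (hv i (by omega)) (hv (i + 1) (by omega)) (hv _ hi)
      (hv (i + 2) (by omega)).ne (hadj i (by omega)) (hadj (i + 1) hi)
      (hne _ _ (by omega) hi (by omega)) (hne _ _ (by omega) hi (by omega)) (ih (by omega))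

theorem color_pendant_edge_eq (hc : ProperEdgeColoring G c) (hfree : ¬ HasRainbowCycle G c 4)
    {v a a' b : V} {m : ℕ} {w : Fin (m + 2) → V} (hw : Function.Injective w)
    (haa' : a ≠ a') (hab : a ≠ b) (ha'b : a' ≠ b)
    (haw : ∀ i, a ≠ w i) (ha'w : ∀ i, a' ≠ w i) (hbw : ∀ i, b ≠ w i)
    (hvw : ∀ i, G.Adj v (w i)) (hva : G.Adj v a) (hva' : G.Adj v a') (hvb : G.Adj v b)
    (hpath : ∀ (i : ℕ) (h : i + 1 < m + 2), G.Adj (w ⟨i, by omega⟩) (w ⟨i + 1, h⟩))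
    (ha' : G.Adj (w 0) a') (hb : G.Adj (w ⟨m + 1, by omega⟩) b)
    (h₀ : c s(w 0, a') = c s(v, a)) :
    c s(w ⟨m + 1, by omega⟩, b) = c s(v, w ⟨m, by omega⟩) := by
  let u : ℕ → V
    | 0 => a
    | 1 => a'
    | i + 2 => if h : i < m + 2 then w ⟨i, h⟩ else b
  have hv : ∀ i ≤ m + 4, G.Adj v (u i) := by
    rintro (_ | _ | i) hi
    exacts [hva, hva', by dsimp only [u]; split_ifs; exacts [hvw _, hvb]]
  have hadj : ∀ i, i + 2 ≤ m + 4 → G.Adj (u (i + 1)) (u (i + 2)) := by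
    rintro (_ | i) hi
    · simpa [u] using ha'.symm
    · dsimp only [u]
      rw [dif_pos (by omega)]
      by_cases hi' : i + 1 < m + 2
      · rw [dif_pos hi']
        exact hpath i hi'
      · obtain rfl : i = m + 1 := by omega
        rw [dif_neg hi']
        exact hb
  have hinj : Set.InjOn u (Set.Iic (m + 4)) := by
    rintro (_ | _ | i) hi (_ | _ | j) hj h
    all_goals rw [Set.mem_Iic] at hi hj
    all_goals
      dsimp only [u] at h
      (try split_ifs at h) <;> first | omega | simp_all [hw.eq_iff, eq_comm]
  simpa [u] using hc.color_path_edge_eq hfree hv hadj hinj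
    (by simpa [u, Sym2.eq_swap] using h₀) (m + 2) le_rfl

theorem color_ne_of_double_star (hc : ProperEdgeColoring G c) (hfree : ¬ HasRainbowCycle G c 4)
    {v a a' b₁ b₂ : V} {m : ℕ} {w : Fin (m + 2) → V} (hw : Function.Injective w)
    (haa' : a ≠ a') (hab₁ : a ≠ b₁) (hab₂ : a ≠ b₂) (ha'b₁ : a' ≠ b₁) (ha'b₂ : a' ≠ b₂)
    (hb₁₂ : b₁ ≠ b₂) (haw : ∀ i, a ≠ w i) (ha'w : ∀ i, a' ≠ w i) (hb₁w : ∀ i, b₁ ≠ w i)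
    (hb₂w : ∀ i, b₂ ≠ w i) (hvw : ∀ i, G.Adj v (w i)) (hva : G.Adj v a) (hva' : G.Adj v a')
    (hvb₁ : G.Adj v b₁) (hvb₂ : G.Adj v b₂)
    (hpath : ∀ (i : ℕ) (h : i + 1 < m + 2), G.Adj (w ⟨i, by omega⟩) (w ⟨i + 1, h⟩))
    (ha' : G.Adj (w 0) a') (hb₁ : G.Adj (w ⟨m + 1, by omega⟩) b₁)
    (hb₂ : G.Adj (w ⟨m + 1, by omega⟩) b₂) : c s(w 0, a') ≠ c s(v, a) := by
  intro h₀
  have h₁ := hc.color_pendant_edge_eq hfree hw haa' hab₁ ha'b₁ haw ha'w hb₁w hvw hva hva' hvb₁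
    hpath ha' hb₁ h₀
  have h₂ := hc.color_pendant_edge_eq hfree hw haa' hab₂ ha'b₂ haw ha'w hb₂w hvw hva hva' hvb₂
    hpath ha' hb₂ h₀
  exact hc.color_ne_s10 hb₁ hb₂ hb₁₂ (h₁.trans h₂.symm)

end ProperEdgeColoring

/-- If `G` admits a proper edge-coloring with no rainbow `C₄`-copy, then for any
vertex `v`, the neighborhood `N(v)` does not contain the double star `D_{2,2}`
or any subdivision thereof: for every `k ≥ 2` there is no path `w 0, …, w (k-1)`
in `N(v)` together with two further leaves at each endpoint, all `k + 4`
vertices being distinct and lying in `N(v)`. -/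
theorem no_double_star_subdivision_in_nbhd {V : Type*} (G : SimpleGraph V)
    (c : Sym2 V → ℕ) (hc : ProperEdgeColoring G c) (hfree : ¬ HasRainbowCycle G c 4)
    (v : V) :
    ∀ (k : ℕ) (hk : 2 ≤ k),
      ¬ ∃ (w : Fin k → V) (a₁ a₂ b₁ b₂ : V),
          Function.Injective w ∧
          a₁ ≠ a₂ ∧ a₁ ≠ b₁ ∧ a₁ ≠ b₂ ∧ a₂ ≠ b₁ ∧ a₂ ≠ b₂ ∧ b₁ ≠ b₂ ∧
          (∀ i, a₁ ≠ w i) ∧ (∀ i, a₂ ≠ w i) ∧ (∀ i, b₁ ≠ w i) ∧ (∀ i, b₂ ≠ w i) ∧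
          (∀ i, G.Adj v (w i)) ∧ G.Adj v a₁ ∧ G.Adj v a₂ ∧ G.Adj v b₁ ∧ G.Adj v b₂ ∧
          (∀ (i : ℕ) (h : i + 1 < k), G.Adj (w ⟨i, by omega⟩) (w ⟨i + 1, h⟩)) ∧
          G.Adj (w ⟨0, by omega⟩) a₁ ∧ G.Adj (w ⟨0, by omega⟩) a₂ ∧
          G.Adj (w ⟨k - 1, by omega⟩) b₁ ∧ G.Adj (w ⟨k - 1, by omega⟩) b₂ := by
  intro k hk
  obtain ⟨m, rfl⟩ : ∃ m, k = m + 2 := ⟨k - 2, by omega⟩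
  rintro ⟨w, a₁, a₂, b₁, b₂, hw, ha₁₂, ha₁b₁, ha₁b₂, ha₂b₁, ha₂b₂, hb₁₂, ha₁w, ha₂w, hb₁w, hb₂w,
    hvw, hva₁, hva₂, hvb₁, hvb₂, hpath, hwa₁, hwa₂, hwb₁, hwb₂⟩
  rcases hc.opposite_color_eq_of_not_hasRainbowCycle_s10 hfree hva₁ hva₂ hwa₁.symm hwa₂.symm ha₁₂
    (hvw 0).ne with h | h
  · exact hc.color_ne_of_double_star hfree hw ha₁₂ ha₁b₁ ha₁b₂ ha₂b₁ ha₂b₂ hb₁₂ ha₁w ha₂w hb₁w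
      hb₂w hvw hva₁ hva₂ hvb₁ hvb₂ hpath hwa₂ hwb₁ hwb₂ h
  · exact hc.color_ne_of_double_star hfree hw ha₁₂.symm ha₂b₁ ha₂b₂ ha₁b₁ ha₁b₂ hb₁₂ ha₂w ha₁w
      hb₁w hb₂w hvw hva₂ hva₁ hvb₁ hvb₂ hpath hwa₁ hwb₁ hwb₂ h
end

section
/- Let n ≥ 8 and let G(n,C_5) be the graph on vertex set {u, v} ∪ W with |W| = n − 2, whose edges are uv, all edges from u and from v to every vertex of W, and a maximum matching on W (a set of ⌊(n−2)/2⌋ pairwise disjoint edges inside W). Then G(n,C_5) admits a proper edge-coloring under which it contains no rainbow copy of C_5. -/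
/-- The graph `G(n, C₅)`: two universal vertices `0` and `1`, together with a
maximum matching on the remaining `n - 2` vertices (vertex `i ≥ 2` is matched to
the other vertex `j ≥ 2` with `i / 2 = j / 2`, i.e. the pairs `(2k, 2k+1)`,
giving `⌊(n-2)/2⌋` matching edges). -/
def GnC5 (n : ℕ) : SimpleGraph (Fin n) :=
  SimpleGraph.fromRel (fun i j => i.val ≤ 1 ∨ j.val ≤ 1 ∨ i.val / 2 = j.val / 2)

/-! Write `u = 0`, `v = 1` for the two universal vertices and `w'` for the partner of `w`
in the matching. Color `uv` by `0`, every matching edge by `1`, `uw` by `w` and `vw` by `w'`.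
This is proper, and it makes the paths `u a b v` through a matching edge `ab` start and end
with the same color (`a = b'`). A `5`-cycle has at most two of its vertices in `{u, v}`,
so it has two consecutive vertices `a, b` in the rest; they form a matching edge, so the
cycle continues as `u a b v` or `v a b u` and is not rainbow. -/

open Finset

theorem properEdgeColoring_lift {V : Type*} {G : SimpleGraph V}
    (f : {f : V → V → ℕ // ∀ a b, f a b = f b a})
    (h : ∀ p q r, G.Adj p q → G.Adj p r → q ≠ r → f.1 p q ≠ f.1 p r) :
    ProperEdgeColoring G (Sym2.lift f) := by
  rintro e₁ he₁ e₂ he₂ hne ⟨p, hp₁, hp₂⟩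
  obtain ⟨q, rfl⟩ := Sym2.mem_iff_exists.1 hp₁
  obtain ⟨r, rfl⟩ := Sym2.mem_iff_exists.1 hp₂
  simp only [Sym2.lift_mk]
  exact h p q r he₁ he₂ fun hqr => hne (hqr ▸ rfl)

theorem ZMod.exists_add_one_notMem_of_card_le_two (S : Finset (ZMod 5)) (hS : #S ≤ 2) :
    ∃ i, i ∉ S ∧ i + 1 ∉ S := by
  revert S
  decide

namespace GnC5

theorem adj_iff {n : ℕ} {i j : Fin n} :
    (GnC5 n).Adj i j ↔ i ≠ j ∧ (i.val ≤ 1 ∨ j.val ≤ 1 ∨ i.val / 2 = j.val / 2) := by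
  rw [GnC5, SimpleGraph.fromRel_adj]
  omega

theorem div_two_eq_of_adj {n : ℕ} {a b : Fin n} (hab : (GnC5 n).Adj a b)
    (ha : 2 ≤ a.val) (hb : 2 ≤ b.val) : a.val / 2 = b.val / 2 := by
  rw [adj_iff] at hab
  omega

theorem val_le_one_of_adj_of_adj {n : ℕ} {a b x : Fin n} (hab : (GnC5 n).Adj a b)
    (hax : (GnC5 n).Adj a x) (hxb : x ≠ b) (ha : 2 ≤ a.val) (hb : 2 ≤ b.val) :
    x.val ≤ 1 := by
  rw [adj_iff] at hab hax
  have : x.val ≠ b.val := Fin.val_ne_of_ne hxb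
  have : a.val ≠ b.val := Fin.val_ne_of_ne hab.1
  have : a.val ≠ x.val := Fin.val_ne_of_ne hax.1
  omega

theorem exists_consecutive_two_le {n : ℕ} (f : ZMod 5 → Fin n) (hf : Function.Injective f) :
    ∃ i, 2 ≤ (f i).val ∧ 2 ≤ (f (i + 1)).val := by
  set S := univ.filter fun i => (f i).val ≤ 1
  have hS : #S ≤ 2 := by
    simpa using card_le_card_of_injOn (fun i => (f i).val) (t := range 2)
      (fun i hi => by simpa [S, Nat.lt_succ_iff] using hi)
      (fun i _ j _ hij => hf (Fin.val_injective hij))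
  obtain ⟨i, hi, hi'⟩ := ZMod.exists_add_one_notMem_of_card_le_two S hS
  simp only [S, mem_filter, mem_univ, true_and, not_le] at hi hi'
  exact ⟨i, hi, hi'⟩

def partner (a : ℕ) : ℕ := 2 * (a / 2) + (1 - a % 2)

def color (a b : ℕ) : ℕ :=
  if max a b ≤ 1 then 0
  else if min a b = 0 then max a b
  else if min a b = 1 then partner (max a b)
  else 1

theorem color_comm (a b : ℕ) : color a b = color b a := by
  rw [color, color, max_comm, min_comm]

theorem color_ne (a b d : ℕ) (hbd : b ≠ d) (hab : a ≠ b) (had : a ≠ d)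
    (h₁ : a ≤ 1 ∨ b ≤ 1 ∨ a / 2 = b / 2) (h₂ : a ≤ 1 ∨ d ≤ 1 ∨ a / 2 = d / 2) :
    color a b ≠ color a d := by
  unfold color partner
  split_ifs <;> omega

theorem color_hub_eq (x y a b : ℕ) (hx : x ≤ 1) (hy : y ≤ 1) (hxy : x ≠ y)
    (ha : 2 ≤ a) (hb : 2 ≤ b) (hab : a ≠ b) (h : a / 2 = b / 2) :
    color x a = color b y := by
  unfold color partner
  split_ifs <;> omega

def coloring (n : ℕ) : Sym2 (Fin n) → ℕ :=
  Sym2.lift ⟨fun i j => color i.val j.val, fun i j => color_comm i.val j.val⟩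

theorem coloring_mk {n : ℕ} (i j : Fin n) : coloring n s(i, j) = color i.val j.val := rfl

theorem properEdgeColoring_coloring (n : ℕ) : ProperEdgeColoring (GnC5 n) (coloring n) := by
  refine properEdgeColoring_lift _ fun p q r hpq hpr hqr => ?_
  rw [adj_iff] at hpq hpr
  exact color_ne _ _ _ (Fin.val_ne_of_ne hqr) (Fin.val_ne_of_ne hpq.1)
    (Fin.val_ne_of_ne hpr.1) hpq.2 hpr.2

theorem not_hasRainbowCycle_coloring_five (n : ℕ) :
    ¬ HasRainbowCycle (GnC5 n) (coloring n) 5 := by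
  rintro ⟨f, hinj, hadj, hrainbow⟩
  obtain ⟨i, ha, hb⟩ := exists_consecutive_two_le f hinj
  have hprev : (GnC5 n).Adj (f i) (f (i - 1)) := by simpa using (hadj (i - 1)).symm
  have hnext : (GnC5 n).Adj (f (i + 1)) (f (i + 2)) := by
    simpa [add_assoc, one_add_one_eq_two] using hadj (i + 1)
  have hx : (f (i - 1)).val ≤ 1 :=
    val_le_one_of_adj_of_adj (hadj i) hprev (hinj.ne (by simp [sub_eq_add_neg]; decide)) ha hb
  have hy : (f (i + 2)).val ≤ 1 :=
    val_le_one_of_adj_of_adj (hadj i).symm hnext (hinj.ne (by simp; decide)) hb ha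
  have hxy : (f (i - 1)).val ≠ (f (i + 2)).val :=
    Fin.val_ne_of_ne (hinj.ne (by simp [sub_eq_add_neg]; decide))
  have hcolor : color (f (i - 1)) (f i) = color (f (i + 1)) (f (i + 2)) :=
    color_hub_eq _ _ _ _ hx hy hxy ha hb (Fin.val_ne_of_ne (hadj i).ne)
      (div_two_eq_of_adj (hadj i) ha hb)
  have hi : i - 1 = i + 1 := hrainbow <| by
    simpa [coloring_mk, add_assoc, one_add_one_eq_two] using hcolor
  exact absurd hi (by simp [sub_eq_add_neg]; decide)

end GnC5

theorem GnC5_admits_rainbow_C5_free_coloring_general (n : ℕ) :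
    ∃ c : Sym2 (Fin n) → ℕ,
      ProperEdgeColoring (GnC5 n) c ∧ ¬ HasRainbowCycle (GnC5 n) c 5 :=
  ⟨GnC5.coloring n, GnC5.properEdgeColoring_coloring n,
    GnC5.not_hasRainbowCycle_coloring_five n⟩

/-- For `n ≥ 8`, the graph `G(n, C₅)` admits a proper edge-coloring with no
rainbow copy of `C₅`. -/
theorem GnC5_admits_rainbow_C5_free_coloring (n : ℕ) (hn : 8 ≤ n) :
    ∃ c : Sym2 (Fin n) → ℕ,
      ProperEdgeColoring (GnC5 n) c ∧ ¬ HasRainbowCycle (GnC5 n) c 5 :=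
  GnC5_admits_rainbow_C5_free_coloring_general n
end
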